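/- arXiv:0906.1844 — 2 statements merged into one kernel-verified Lean document; each statement's English description precedes it below -/
import Mathlib

section
/- (Corollary 4.4, exact form) For every n ≥ 0, the total mid-height of all symmetric Dyck paths of length 2n, namely ∑_{k=0}^{n} k · d_{n,k}, equals 2^n − C(n, ⌊n/2⌋). In particular it equals 2^{2m} − C(2m,m) when n = 2m and 2^{2m+1} − C(2m+1,m) when n = 2m+1. -/
/-!
Only the `k = n - 2j` terms are nonzero, and for them the ballot formula reads
`d_{n,n-2j} = C(n,j) - C(n,j-1)`. Summation by parts against the weights `n - 2j` turns
`∑_j (n - 2j)·d_{n,n-2j}` into `2·∑_{j<m} C(n,j) + (n - 2m)·C(n,m)` with `m = ⌊n/2⌋`, and by the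
symmetry `C(n,j) = C(n,n-j)` this is `2^n - C(n,m)`.
-/

/-- The ballot numbers `d_{n,k} = ((k+1)/(n+1)) * C(n+1, (n-k)/2)` when `k ≤ n` and
`n ≡ k (mod 2)`, and `0` otherwise. -/
def dnk (n k : ℕ) : ℕ :=
  if k ≤ n ∧ (n - k) % 2 = 0 then (k + 1) * Nat.choose (n + 1) ((n - k) / 2) / (n + 1)
  else 0

open Finset

theorem sum_range_succ_eq_sum_range_sub_two_mul {M : Type*} [AddCommMonoid M] {n : ℕ}
    (f : ℕ → M) (hf : ∀ k ≤ n, (n - k) % 2 = 1 → f k = 0) :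
    ∑ k ∈ range (n + 1), f k = ∑ j ∈ range (n / 2 + 1), f (n - 2 * j) := by
  have hinj : Set.InjOn (fun j ↦ n - 2 * j) (range (n / 2 + 1)) := by
    intro a ha b hb hab
    simp only [coe_range, Set.mem_Iio] at ha hb hab
    omega
  rw [← sum_image hinj]
  refine (sum_subset ?_ fun k hk hk' ↦ ?_).symm
  · intro k hk
    simp only [mem_image, mem_range] at hk ⊢
    omega
  · simp only [mem_image, mem_range, not_exists, not_and] at hk hk'
    refine hf k (by omega) (by_contra fun heven ↦ hk' ((n - k) / 2) (by omega) (by omega))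

theorem sum_range_mul_sub {R : Type*} [CommRing R] (w c : ℕ → R) (M : ℕ) :
    ∑ j ∈ range M, w (j + 1) * (c (j + 1) - c j)
      = w M * c M - w 0 * c 0 - ∑ j ∈ range M, (w (j + 1) - w j) * c j := by
  induction M with
  | zero => simp
  | succ M ih =>
    rw [sum_range_succ, ih, sum_range_succ]
    ring

theorem sum_range_choose_add_sum_range_succ_choose (n m : ℕ) :
    ∑ j ∈ range m, n.choose j + ∑ j ∈ range (m + 1), n.choose j
      = ∑ j ∈ range (m + 1), (n + 1).choose j := by
  induction m with
  | zero => simp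
  | succ m ih =>
    rw [sum_range_succ, sum_range_succ _ (m + 1), sum_range_succ _ (m + 1), ← ih,
      Nat.choose_succ_succ]
    ring

theorem two_mul_sum_range_choose_add_mul_choose_half (n : ℕ) :
    2 * ∑ j ∈ range (n / 2), n.choose j + (n % 2 + 1) * n.choose (n / 2) = 2 ^ n := by
  obtain ⟨m, rfl | rfl⟩ := Nat.even_or_odd' n
  · have hpascal := sum_range_choose_add_sum_range_succ_choose (2 * m) m
    rw [Nat.sum_range_choose_halfway, sum_range_succ] at hpascal
    rw [pow_mul, show 2 * m / 2 = m by omega, show 2 * m % 2 = 0 by omega]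
    norm_num at hpascal ⊢
    omega
  · have hhalf := Nat.sum_range_choose_halfway m
    rw [sum_range_succ] at hhalf
    rw [pow_succ, pow_mul, show (2 * m + 1) / 2 = m by omega, show (2 * m + 1) % 2 = 1 by omega]
    norm_num at hhalf ⊢
    omega

theorem dnk_self (n : ℕ) : dnk n n = 1 := by
  simp [dnk, Nat.div_self n.succ_pos]

theorem dnk_eq_zero_of_mod_two_eq_one {n k : ℕ} (h : (n - k) % 2 = 1) : dnk n k = 0 := by
  simp [dnk, h]

theorem dnk_sub_two_mul_succ {n j : ℕ} (h : 2 * (j + 1) ≤ n) :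
    (dnk n (n - 2 * (j + 1)) : ℤ) = n.choose (j + 1) - n.choose j := by
  have hle : n.choose j ≤ n.choose (j + 1) := Nat.choose_le_succ_of_lt_half_left (by omega)
  have hballot : (n - 2 * (j + 1) + 1) * (n + 1).choose (j + 1)
      = (n + 1) * (n.choose (j + 1) - n.choose j) := by
    have hup := Nat.choose_mul_succ_eq n (j + 1)
    have hdown := Nat.add_one_mul_choose_eq n j
    rw [show n + 1 - (j + 1) = n - j by omega] at hup
    zify [hle, h, show j ≤ n by omega] at hup hdown ⊢
    linear_combination hdown - hup
  rw [dnk, if_pos (by omega), show (n - (n - 2 * (j + 1))) / 2 = j + 1 by omega, hballot,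
    Nat.mul_div_cancel_left _ n.succ_pos]
  exact Nat.cast_sub hle

theorem sum_sub_two_mul_mul_dnk (n : ℕ) :
    ((∑ j ∈ range (n / 2 + 1), (n - 2 * j) * dnk n (n - 2 * j) : ℕ) : ℤ)
      = 2 ^ n - n.choose (n / 2) := by
  have hterm : ∀ j ∈ range (n / 2), (((n - 2 * (j + 1)) * dnk n (n - 2 * (j + 1)) : ℕ) : ℤ)
      = ((n : ℤ) - 2 * (j + 1 : ℕ)) * (n.choose (j + 1) - n.choose j) := by
    intro j hj
    have h : 2 * (j + 1) ≤ n := by rw [mem_range] at hj; omega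
    push_cast [h, dnk_sub_two_mul_succ h]
    ring
  have hstep : ∀ j : ℕ, (n : ℤ) - 2 * (j + 1 : ℕ) - (n - 2 * (j : ℕ)) = -2 := by
    intro j
    push_cast
    ring
  have hhalf := two_mul_sum_range_choose_add_mul_choose_half n
  rw [Nat.cast_sum, sum_range_succ', sum_congr rfl hterm,
    sum_range_mul_sub (fun j ↦ (n : ℤ) - 2 * (j : ℕ)) (fun j ↦ (n.choose j : ℤ))]
  simp only [hstep, ← mul_sum, Nat.cast_zero, mul_zero, Nat.sub_zero, sub_zero, dnk_self,
    Nat.choose_zero_right]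
  zify at hhalf
  push_cast at hhalf ⊢
  linear_combination hhalf - (n.choose (n / 2) : ℤ) * Int.emod_def (n : ℤ) 2

/-- **Corollary 4.4 (exact form).** The total mid-height of all symmetric Dyck paths of
length `2n` is `∑_{k=0}^n k·d_{n,k} = 2^n - C(n, ⌊n/2⌋)`. -/
theorem total_midheight (n : ℕ) :
    ∑ k ∈ Finset.range (n + 1), k * dnk n k = 2 ^ n - Nat.choose n (n / 2) := by
  rw [sum_range_succ_eq_sum_range_sub_two_mul (fun k ↦ k * dnk n k)
    fun k _ hk ↦ by simp [dnk_eq_zero_of_mod_two_eq_one hk]]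
  zify [Nat.choose_le_two_pow n (n / 2)]
  exact_mod_cast sum_sub_two_mul_mul_dnk n
end

section
/- (Theorem 4.5, even case) For every m ≥ 0, the total number of lattice points on the x-axis, summed over all symmetric Dyck paths of length 4m (i.e. n = 2m), equals (4m+1) · Cat_m, where Cat_m is the m-th Catalan number. -/
/-- Value of a Dyck step: `true` is an up step (+1), `false` a down step (-1). -/
def stepVal (b : Bool) : ℤ := if b then 1 else -1

/-- Partial sum of the first `i` steps of the word `w`. -/
def psum {n : ℕ} (w : Fin n → Bool) (i : ℕ) : ℤ :=
  ∑ j : Fin n, if (j : ℕ) < i then stepVal (w j) else 0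

/-- `d n`: number of symmetric Dyck paths of length `2n`, encoded by their left half,
a word in `{+1,-1}^n` with all partial sums nonnegative. -/
noncomputable def d (n : ℕ) : ℕ := Set.ncard {w : Fin n → Bool | ∀ i ≤ n, 0 ≤ psum w i}

/-- A full symmetric Dyck path of length `2n`: all partial sums nonnegative, total sum `0`,
and the word is antisymmetric under reversal (`w_{2n+1-i} = -w_i`). -/
def IsSymDyck {N : ℕ} (w : Fin N → Bool) : Prop :=
  (∀ i ≤ N, 0 ≤ psum w i) ∧ psum w N = 0 ∧ ∀ i : Fin N, w (Fin.rev i) = !(w i)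

/-- The number of lattice points of the path `w` lying on the x-axis. -/
def axisPoints {N : ℕ} (w : Fin N → Bool) : ℕ :=
  ((Finset.range (N + 1)).filter (fun i => psum w i = 0)).card

/-- ℕ-indexed step, 0 out of range. -/
def dstep {n : ℕ} (w : Fin n → Bool) (j : ℕ) : ℤ := if h : j < n then stepVal (w ⟨j, h⟩) else 0

lemma psum_eq_range {n : ℕ} (w : Fin n → Bool) (i : ℕ) :
    psum w i = ∑ j ∈ Finset.range i, dstep w j := by
  have h1 : psum w i = ∑ j ∈ Finset.range n, (if j < i then dstep w j else 0) := by
    rw [psum, ← Fin.sum_univ_eq_sum_range (fun j => if j < i then dstep w j else 0) n]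
    apply Finset.sum_congr rfl
    intro j _
    simp [dstep, j.isLt]
  rw [h1]
  rcases le_total i n with h | h
  · rw [← Finset.sum_subset (Finset.range_subset_range.2 h)
      (by intro x _ hx; simp only [Finset.mem_range] at hx; simp [hx])]
    apply Finset.sum_congr rfl
    intro j hj
    simp [Finset.mem_range.1 hj]
  · rw [Finset.sum_subset (Finset.range_subset_range.2 h)
      (by intro x hx hx2
          have : ¬ x < n := fun c => hx2 (Finset.mem_range.2 c)
          simp [dstep, this])]
    apply Finset.sum_congr rfl
    intro j hj
    simp [Finset.mem_range.1 hj]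

lemma psum_zero {n : ℕ} (w : Fin n → Bool) : psum w 0 = 0 := by simp [psum_eq_range]

lemma psum_succ {n : ℕ} (w : Fin n → Bool) (i : ℕ) :
    psum w (i + 1) = psum w i + dstep w i := by
  simp [psum_eq_range, Finset.sum_range_succ]

lemma dstep_eq {n : ℕ} (w : Fin n → Bool) (j : ℕ) (h : j < n) :
    dstep w j = stepVal (w ⟨j, h⟩) := by simp [dstep, h]

lemma stepVal_not (b : Bool) : stepVal (!b) = -stepVal b := by cases b <;> simp [stepVal]

lemma psum_congr {n n' : ℕ} (w : Fin n → Bool) (w' : Fin n' → Bool) (i : ℕ)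
    (h : ∀ j < i, dstep w j = dstep w' j) : psum w i = psum w' i := by
  rw [psum_eq_range, psum_eq_range]
  exact Finset.sum_congr rfl (fun j hj => h j (Finset.mem_range.1 hj))

lemma psum_parity {n : ℕ} (w : Fin n → Bool) (i : ℕ) (hi : i ≤ n) :
    Even (psum w i + i) := by
  induction i with
  | zero => simp [psum_zero]
  | succ k ih =>
    have hk : k < n := hi
    rw [psum_succ, dstep_eq w k hk]
    have h2 := ih (le_of_lt hk)
    rcases h2 with ⟨t, ht⟩
    cases hb : w ⟨k, hk⟩ <;> · refine ⟨t + (if (w ⟨k, hk⟩ : Bool) then 1 else 0), ?_⟩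
                               simp [hb, stepVal] at ht ⊢; linarith

lemma psum_total {n : ℕ} (w : Fin (2 * n) → Bool)
    (hsym : ∀ i : Fin (2 * n), w (Fin.rev i) = !(w i)) : psum w (2 * n) = 0 := by
  have h1 : psum w (2 * n) = ∑ j : Fin (2 * n), stepVal (w j) := by
    rw [psum]; exact Finset.sum_congr rfl (fun j _ => by simp [j.isLt])
  have h2 : ∑ j : Fin (2 * n), stepVal (w j) = ∑ j : Fin (2 * n), stepVal (w (Fin.rev j)) :=
    (Fintype.sum_equiv Fin.revPerm _ _ (fun j => rfl)).symm
  have h3 : ∑ j : Fin (2 * n), stepVal (w (Fin.rev j)) = -∑ j : Fin (2 * n), stepVal (w j) := by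
    rw [← Finset.sum_neg_distrib]
    exact Finset.sum_congr rfl (fun j _ => by rw [hsym j, stepVal_not])
  rw [h1]; rw [h2] at h1 ⊢; linarith [h3, h2]

lemma dstep_rev {n : ℕ} (w : Fin (2 * n) → Bool)
    (hsym : ∀ i : Fin (2 * n), w (Fin.rev i) = !(w i)) (j : ℕ) (hj : j < 2 * n) :
    dstep w (2 * n - 1 - j) = -dstep w j := by
  have hj2 : 2 * n - 1 - j < 2 * n := by omega
  rw [dstep_eq w _ hj2, dstep_eq w _ hj]
  have : (⟨2 * n - 1 - j, hj2⟩ : Fin (2 * n)) = Fin.rev ⟨j, hj⟩ := by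
    ext; simp [Fin.val_rev]; omega
  rw [this, hsym, stepVal_not]

lemma psum_reflect {n : ℕ} (w : Fin (2 * n) → Bool)
    (hsym : ∀ i : Fin (2 * n), w (Fin.rev i) = !(w i)) (i : ℕ) (hi : i ≤ 2 * n) :
    psum w (2 * n - i) = psum w i := by
  have key : ∑ j ∈ Finset.Ico i (2 * n), dstep w j = -psum w (2 * n - i) := by
    rw [psum_eq_range, ← Finset.sum_neg_distrib]
    refine (Finset.sum_nbij' (fun j => 2 * n - 1 - j) (fun j => 2 * n - 1 - j) ?_ ?_ ?_ ?_ ?_).symm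
    · intro a ha; simp only [Finset.mem_range] at ha; simp only [Finset.mem_Ico]; omega
    · intro a ha; simp only [Finset.mem_Ico] at ha; simp only [Finset.mem_range]; omega
    · intro a ha; simp only [Finset.mem_range] at ha
      show 2 * n - 1 - (2 * n - 1 - a) = a; omega
    · intro a ha; simp only [Finset.mem_Ico] at ha
      show 2 * n - 1 - (2 * n - 1 - a) = a; omega
    · intro a ha; simp only [Finset.mem_range] at ha
      rw [dstep_rev w hsym a (by omega)]
  have h2 : psum w i + ∑ j ∈ Finset.Ico i (2 * n), dstep w j = psum w (2 * n) := by
    rw [psum_eq_range, psum_eq_range]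
    exact Finset.sum_range_add_sum_Ico _ hi
  have h3 := psum_total w hsym
  rw [key] at h2; linarith

/-- Extend a half-word to a full symmetric word. -/
def extw {n : ℕ} (h : Fin n → Bool) (j : Fin (2 * n)) : Bool :=
  if h2 : (j : ℕ) < n then h ⟨j, h2⟩
  else !(h ⟨2 * n - 1 - j, by have := j.isLt; omega⟩)

/-- Restrict a full word to its left half. -/
def halfw {n : ℕ} (w : Fin (2 * n) → Bool) (j : Fin n) : Bool := w ⟨j, by have := j.isLt; omega⟩

lemma extw_sym {n : ℕ} (h : Fin n → Bool) (i : Fin (2 * n)) :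
    extw h (Fin.rev i) = !(extw h i) := by
  have hi := i.isLt
  rcases lt_or_ge (i : ℕ) n with hc | hc
  · have h1 : ¬ ((Fin.rev i : Fin (2 * n)) : ℕ) < n := by rw [Fin.val_rev]; omega
    rw [extw, dif_neg h1, extw, dif_pos hc]
    congr 2
    ext; simp [Fin.val_rev]; omega
  · have h1 : ((Fin.rev i : Fin (2 * n)) : ℕ) < n := by rw [Fin.val_rev]; omega
    rw [extw, dif_pos h1, extw, dif_neg (by omega), Bool.not_not]
    congr 1
    ext; simp [Fin.val_rev]; omega

lemma dstep_extw {n : ℕ} (h : Fin n → Bool) (j : ℕ) (hj : j < n) :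
    dstep (extw h) j = dstep h j := by
  rw [dstep_eq _ j (by omega), dstep_eq _ j hj, extw, dif_pos hj]

lemma psum_extw {n : ℕ} (h : Fin n → Bool) (i : ℕ) (hi : i ≤ n) :
    psum (extw h) i = psum h i :=
  psum_congr _ _ i (fun j hj => dstep_extw h j (by omega))

lemma extw_isSymDyck {n : ℕ} (h : Fin n → Bool) (hb : ∀ i ≤ n, 0 ≤ psum h i) :
    IsSymDyck (extw h) := by
  refine ⟨?_, psum_total _ (extw_sym h), extw_sym h⟩
  intro i hi
  rcases le_or_gt i n with hc | hc
  · rw [psum_extw h i hc]; exact hb i hc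
  · have h1 : psum (extw h) (2 * n - (2 * n - i)) = psum (extw h) (2 * n - i) :=
      psum_reflect _ (extw_sym h) _ (by omega)
    have h2 : 2 * n - (2 * n - i) = i := by omega
    rw [h2] at h1
    rw [h1, psum_extw h _ (by omega)]
    exact hb _ (by omega)

lemma extw_halfw {n : ℕ} (w : Fin (2 * n) → Bool)
    (hsym : ∀ i : Fin (2 * n), w (Fin.rev i) = !(w i)) : extw (halfw w) = w := by
  funext j
  have hj := j.isLt
  rcases lt_or_ge (j : ℕ) n with hc | hc
  · rw [extw, dif_pos hc]; rfl
  · rw [extw, dif_neg (by omega)]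
    have h1 : (⟨2 * n - 1 - (j : ℕ), by omega⟩ : Fin (2 * n)) = Fin.rev j := by
      ext; simp [Fin.val_rev]; omega
    show (!(w (⟨2 * n - 1 - (j : ℕ), by omega⟩ : Fin (2 * n)))) = w j
    rw [h1, hsym, Bool.not_not]

lemma halfw_ballot {n : ℕ} (w : Fin (2 * n) → Bool) (hw : IsSymDyck w) :
    ∀ i ≤ n, 0 ≤ psum (halfw w) i := by
  intro i hi
  have : psum (halfw w) i = psum w i :=
    psum_congr _ _ i (fun j hj => by
      rw [dstep_eq _ j (by omega), dstep_eq _ j (by omega)]; rfl)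
  rw [this]; exact hw.1 i (by omega)

lemma axisPoints_extw {n : ℕ} (h : Fin n → Bool) :
    axisPoints (extw h) =
      2 * ((Finset.range n).filter (fun i => psum h i = 0)).card
        + (if psum h n = 0 then 1 else 0) := by
  classical
  set w := extw h with hw
  set A := (Finset.range n).filter (fun i => psum h i = 0) with hA
  set B := A.image (fun i => 2 * n - i) with hB
  set C := ({n} : Finset ℕ).filter (fun _ => psum h n = 0) with hC
  have hrefl : ∀ i, n ≤ i → i ≤ 2 * n → psum w i = psum h (2 * n - i) := by
    intro i h1 h2
    have e1 : psum w (2 * n - (2 * n - i)) = psum w (2 * n - i) :=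
      psum_reflect _ (extw_sym h) _ (by omega)
    have e2 : 2 * n - (2 * n - i) = i := by omega
    rw [e2] at e1
    rw [e1, psum_extw h _ (by omega)]
  have hset : (Finset.range (2 * n + 1)).filter (fun i => psum w i = 0) = A ∪ B ∪ C := by
    ext i
    simp only [hA, hB, hC, Finset.mem_filter, Finset.mem_union, Finset.mem_image,
      Finset.mem_range, Finset.mem_singleton]
    constructor
    · rintro ⟨h1, h2⟩
      rcases lt_trichotomy i n with hc | hc | hc
      · exact Or.inl (Or.inl ⟨hc, by rw [← psum_extw h i (le_of_lt hc)]; exact h2⟩)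
      · subst hc
        exact Or.inr ⟨rfl, by rw [← psum_extw h i le_rfl]; exact h2⟩
      · refine Or.inl (Or.inr ⟨2 * n - i, ⟨⟨by omega, ?_⟩, by omega⟩⟩)
        rw [← hrefl i (by omega) (by omega)]; exact h2
    · rintro ((⟨hc, hz⟩ | ⟨a, ⟨⟨ha, hz⟩, rfl⟩⟩) | ⟨rfl, hz⟩)
      · exact ⟨by omega, by rw [psum_extw h i (le_of_lt hc)]; exact hz⟩
      · refine ⟨by omega, ?_⟩
        rw [hrefl _ (by omega) (by omega)]
        have : 2 * n - (2 * n - a) = a := by omega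
        rw [this]; exact hz
      · exact ⟨by omega, by rw [psum_extw h i le_rfl]; exact hz⟩
  have hAB : Disjoint A B := by
    rw [Finset.disjoint_left]
    rintro x hx hx'
    simp only [hA, hB, Finset.mem_filter, Finset.mem_range, Finset.mem_image] at hx hx'
    obtain ⟨a, ⟨ha, _⟩, rfl⟩ := hx'
    omega
  have hABC : Disjoint (A ∪ B) C := by
    rw [Finset.disjoint_left]
    rintro x hx hx'
    simp only [hA, hB, hC, Finset.mem_filter, Finset.mem_range, Finset.mem_image,
      Finset.mem_union, Finset.mem_singleton] at hx hx'
    obtain ⟨rfl, _⟩ := hx'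
    rcases hx with ⟨h1, _⟩ | ⟨a, ⟨ha, _⟩, hh⟩ <;> omega
  have hcardB : B.card = A.card := by
    apply Finset.card_image_of_injOn
    intro x hx y hy hxy
    simp only [hA, Finset.mem_coe, Finset.mem_filter, Finset.mem_range] at hx hy
    have hxy' : 2 * n - x = 2 * n - y := hxy
    omega
  have hcardC : C.card = if psum h n = 0 then 1 else 0 := by
    by_cases hz : psum h n = 0 <;> simp [hC, hz]
  rw [axisPoints, hset, Finset.card_union_of_disjoint hABC,
    Finset.card_union_of_disjoint hAB, hcardB, hcardC]
  ring

open Finset in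
open Classical in
noncomputable def ballotF (n : ℕ) : Finset (Fin n → Bool) :=
  univ.filter (fun h => ∀ i ≤ n, 0 ≤ psum h i)

open Finset in
open Classical in
noncomputable def dyckF (n : ℕ) : Finset (Fin n → Bool) :=
  univ.filter (fun h => (∀ i ≤ n, 0 ≤ psum h i) ∧ psum h n = 0)

lemma halfw_extw {n : ℕ} (h : Fin n → Bool) : halfw (extw h) = h := by
  funext j
  show extw h ⟨(j : ℕ), _⟩ = h j
  rw [extw, dif_pos j.isLt]

open Classical in
lemma reduction (n : ℕ) :
    ∑ w ∈ Finset.univ.filter (fun w : Fin (2 * n) → Bool => IsSymDyck w), axisPoints w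
      = ∑ h ∈ ballotF n,
          (2 * ((Finset.range n).filter (fun i => psum h i = 0)).card
            + (if psum h n = 0 then 1 else 0)) := by
  refine Finset.sum_bij' (fun w _ => halfw w) (fun h _ => extw h) ?_ ?_ ?_ ?_ ?_
  · intro w hw
    simp only [Finset.mem_filter, Finset.mem_univ, true_and] at hw
    simp only [ballotF, Finset.mem_filter, Finset.mem_univ, true_and]
    exact halfw_ballot w hw
  · intro h hh
    simp only [ballotF, Finset.mem_filter, Finset.mem_univ, true_and] at hh
    simp only [Finset.mem_filter, Finset.mem_univ, true_and]
    exact extw_isSymDyck h hh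
  · intro w hw
    simp only [Finset.mem_filter, Finset.mem_univ, true_and] at hw
    exact extw_halfw w hw.2.2
  · intro h _
    exact halfw_extw h
  · intro w hw
    simp only [Finset.mem_filter, Finset.mem_univ, true_and] at hw
    conv_lhs => rw [← extw_halfw w hw.2.2]
    exact axisPoints_extw (halfw w)

lemma psum_split {n : ℕ} (h : Fin n → Bool) {i k : ℕ} (hik : i ≤ k) :
    psum h k = psum h i + ∑ j ∈ Finset.Ico i k, dstep h j := by
  rw [psum_eq_range, psum_eq_range, Finset.sum_range_add_sum_Ico _ hik]

open Classical in
lemma stepB (n : ℕ) :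
    ∑ h ∈ ballotF n,
        (2 * ((Finset.range n).filter (fun i => psum h i = 0)).card
          + (if psum h n = 0 then 1 else 0))
      = 2 * ∑ i ∈ Finset.range n, ((ballotF n).filter (fun h => psum h i = 0)).card
        + (dyckF n).card := by
  rw [Finset.sum_add_distrib, ← Finset.mul_sum]
  congr 1
  · congr 1
    have : ∀ h ∈ ballotF n, ((Finset.range n).filter (fun i => psum h i = 0)).card
        = ∑ i ∈ Finset.range n, if psum h i = 0 then 1 else 0 := by
      intro h _; rw [Finset.card_filter]
    rw [Finset.sum_congr rfl this, Finset.sum_comm]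
    apply Finset.sum_congr rfl
    intro i _
    rw [Finset.card_filter]
  · rw [← Finset.sum_filter, dyckF, ballotF, Finset.filter_filter]
    exact (Finset.card_eq_sum_ones _).symm

lemma psum_take {n i : ℕ} (hi : i ≤ n) (h : Fin n → Bool) (k : ℕ) (hk : k ≤ i) :
    psum (fun j : Fin i => h ⟨j, lt_of_lt_of_le j.isLt hi⟩) k = psum h k :=
  psum_congr _ _ k (fun j hj => by
    rw [dstep_eq _ j (by omega), dstep_eq _ j (by omega)])

lemma psum_drop {n i : ℕ} (hi : i ≤ n) (h : Fin n → Bool) (hz : psum h i = 0) (k : ℕ)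
    (hk : k ≤ n - i) :
    psum (fun j : Fin (n - i) => h ⟨i + j, by have := j.isLt; omega⟩) k = psum h (i + k) := by
  have h1 : psum h (i + k) = ∑ j ∈ Finset.Ico i (i + k), dstep h j := by
    rw [psum_split h (Nat.le_add_right i k), hz, zero_add]
  rw [h1, Finset.sum_Ico_eq_sum_range]
  simp only [Nat.add_sub_cancel_left]
  rw [psum_eq_range]
  apply Finset.sum_congr rfl
  intro j hj
  have hj' := Finset.mem_range.1 hj
  rw [dstep_eq _ j (by omega), dstep_eq _ (i + j) (by omega)]

lemma psum_glue_low {n i : ℕ} (hi : i ≤ n) (p : Fin i → Bool) (q : Fin (n - i) → Bool)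
    (k : ℕ) (hk : k ≤ i) :
    psum (fun j : Fin n => if hc : (j : ℕ) < i then p ⟨j, hc⟩
      else q ⟨(j : ℕ) - i, by have := j.isLt; omega⟩) k = psum p k :=
  psum_congr _ _ k (fun j hj => by
    rw [dstep_eq _ j (by omega), dstep_eq _ j (by omega)]
    simp only []
    rw [dif_pos (by omega : j < i)])

lemma psum_glue_high {n i : ℕ} (hi : i ≤ n) (p : Fin i → Bool) (q : Fin (n - i) → Bool)
    (k : ℕ) (hk1 : i ≤ k) (hk2 : k ≤ n) :
    psum (fun j : Fin n => if hc : (j : ℕ) < i then p ⟨j, hc⟩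
      else q ⟨(j : ℕ) - i, by have := j.isLt; omega⟩) k
      = psum p i + psum q (k - i) := by
  set g : Fin n → Bool := fun j => if hc : (j : ℕ) < i then p ⟨j, hc⟩
      else q ⟨(j : ℕ) - i, by have := j.isLt; omega⟩ with hg
  rw [psum_split g hk1, psum_glue_low hi p q i le_rfl]
  congr 1
  rw [Finset.sum_Ico_eq_sum_range, psum_eq_range]
  apply Finset.sum_congr rfl
  intro j hj
  have hj' := Finset.mem_range.1 hj
  rw [dstep_eq _ (i + j) (by omega), dstep_eq _ j (by omega)]
  show stepVal (g ⟨i + j, by omega⟩) = _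
  rw [hg]
  simp only []
  rw [dif_neg (by omega : ¬ i + j < i)]
  have he : (⟨i + j - i, by omega⟩ : Fin (n - i)) = (⟨j, by omega⟩ : Fin (n - i)) :=
    by simp only [Fin.mk.injEq]; omega
  show stepVal (q ⟨i + j - i, by omega⟩) = stepVal (q ⟨j, by omega⟩)
  rw [he]

open Classical in
lemma card_split {n i : ℕ} (hi : i ≤ n) :
    ((ballotF n).filter (fun h => psum h i = 0)).card
      = (dyckF i).card * (ballotF (n - i)).card := by
  rw [← Finset.card_product]
  refine Finset.card_bij'
    (fun h _ => (fun j : Fin i => h ⟨j, lt_of_lt_of_le j.isLt hi⟩,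
                 fun j : Fin (n - i) => h ⟨i + j, by have := j.isLt; omega⟩))
    (fun pq _ => fun j : Fin n => if hc : (j : ℕ) < i then pq.1 ⟨j, hc⟩
                 else pq.2 ⟨(j : ℕ) - i, by have := j.isLt; omega⟩) ?_ ?_ ?_ ?_
  · intro h hh
    simp only [ballotF, Finset.mem_filter, Finset.mem_univ, true_and] at hh
    obtain ⟨hb, hz⟩ := hh
    simp only [dyckF, ballotF, Finset.mem_product, Finset.mem_filter, Finset.mem_univ, true_and]
    refine ⟨⟨?_, ?_⟩, ?_⟩
    · intro k hk
      rw [psum_take hi h k hk]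
      exact hb k (le_trans hk hi)
    · rw [psum_take hi h i le_rfl]
      exact hz
    · intro k hk
      rw [psum_drop hi h hz k hk]
      exact hb _ (by omega)
  · intro pq hpq
    simp only [dyckF, ballotF, Finset.mem_product, Finset.mem_filter, Finset.mem_univ,
      true_and] at hpq
    obtain ⟨⟨hpb, hpz⟩, hqb⟩ := hpq
    simp only [ballotF, Finset.mem_filter, Finset.mem_univ, true_and]
    constructor
    · intro k hk
      rcases le_or_gt k i with hc | hc
      · rw [psum_glue_low hi pq.1 pq.2 k hc]
        exact hpb k hc
      · rw [psum_glue_high hi pq.1 pq.2 k (le_of_lt hc) hk, hpz, zero_add]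
        exact hqb _ (by omega)
    · rw [psum_glue_low hi pq.1 pq.2 i le_rfl]
      exact hpz
  · intro h _
    funext j
    simp only []
    rcases lt_or_ge (j : ℕ) i with hc | hc
    · rw [dif_pos hc]
    · rw [dif_neg (by omega)]
      congr 1
      apply Fin.ext
      show i + ((j : ℕ) - i) = (j : ℕ)
      omega
  · intro pq _
    have h1 : (fun j : Fin i =>
        (fun j' : Fin n => if hc : (j' : ℕ) < i then pq.1 ⟨j', hc⟩
          else pq.2 ⟨(j' : ℕ) - i, by have := j'.isLt; omega⟩)
            ⟨j, lt_of_lt_of_le j.isLt hi⟩) = pq.1 := by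
      funext j
      simp only []
      rw [dif_pos j.isLt]
    have h2 : (fun j : Fin (n - i) =>
        (fun j' : Fin n => if hc : (j' : ℕ) < i then pq.1 ⟨j', hc⟩
          else pq.2 ⟨(j' : ℕ) - i, by have := j'.isLt; omega⟩)
            ⟨i + j, by have := j.isLt; omega⟩) = pq.2 := by
      funext j
      simp only []
      rw [dif_neg (by omega)]
      have he : (⟨i + (j : ℕ) - i, by have := j.isLt; omega⟩ : Fin (n - i)) = j :=
        Fin.ext (by show i + (j : ℕ) - i = (j : ℕ); omega)
      rw [he]
    exact Prod.ext h1 h2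

lemma even_of_psum_zero {n i : ℕ} (h : Fin n → Bool) (hi : i ≤ n) (hz : psum h i = 0) :
    Even i := by
  have := psum_parity h i hi
  rw [hz, zero_add] at this
  exact Int.even_coe_nat i |>.mp this

open Classical in
lemma filter_odd_empty {n i : ℕ} (hi : i ≤ n) (hodd : ¬ Even i) :
    ((ballotF n).filter (fun h => psum h i = 0)) = ∅ := by
  rw [Finset.filter_eq_empty_iff]
  intro h _ hz
  exact hodd (even_of_psum_zero h hi hz)

open Classical in
lemma dyckF_odd_empty {k : ℕ} (hodd : ¬ Even k) : dyckF k = ∅ := by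
  rw [dyckF, Finset.filter_eq_empty_iff]
  rintro h - ⟨_, hz⟩
  exact hodd (even_of_psum_zero h le_rfl hz)

open Classical in
lemma ballot_ext (k : ℕ) :
    (ballotF (k + 1)).card + (dyckF k).card = 2 * (ballotF k).card := by
  classical
  set T := (ballotF k) ×ˢ (Finset.univ : Finset Bool) with hT
  set bad := T.filter (fun hb : (Fin k → Bool) × Bool => psum hb.1 k = 0 ∧ hb.2 = false) with hbad
  set good := T.filter
    (fun hb : (Fin k → Bool) × Bool => ¬(psum hb.1 k = 0 ∧ hb.2 = false)) with hgood
  have hmem_ballot : ∀ {m : ℕ} (h : Fin m → Bool), h ∈ ballotF m ↔ ∀ i ≤ m, 0 ≤ psum h i := by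
    intro m h
    simp [ballotF]
  have hmem_dyck : ∀ {m : ℕ} (h : Fin m → Bool),
      h ∈ dyckF m ↔ (∀ i ≤ m, 0 ≤ psum h i) ∧ psum h m = 0 := by
    intro m h
    simp [dyckF]
  have htot : good.card + bad.card = T.card := by
    rw [hgood, hbad]
    rw [add_comm]
    exact Finset.card_filter_add_card_filter_not _
  have hTcard : T.card = 2 * (ballotF k).card := by
    rw [hT, Finset.card_product]
    simp [mul_comm]
  have hbadcard : bad.card = (dyckF k).card := by
    refine Finset.card_bij' (fun hb _ => hb.1) (fun h _ => (h, false)) ?_ ?_ ?_ ?_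
    · intro hb hhb
      have h2 := (Finset.mem_filter.1 hhb).2
      have hb1 := (Finset.mem_product.1 (Finset.mem_filter.1 hhb).1).1
      rw [hmem_dyck]
      exact ⟨(hmem_ballot hb.1).1 hb1, h2.1⟩
    · intro h hh
      rw [hmem_dyck] at hh
      apply Finset.mem_filter.2
      refine ⟨Finset.mem_product.2 ⟨(hmem_ballot h).2 hh.1, Finset.mem_univ _⟩, hh.2, rfl⟩
    · intro hb hhb
      have h2 := (Finset.mem_filter.1 hhb).2
      exact Prod.ext rfl h2.2.symm
    · intro h _
      rfl
  have hpsum_app : ∀ (h : Fin k → Bool) (b : Bool) (j : ℕ), j ≤ k →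
      psum (fun j' : Fin (k+1) => if hc : (j' : ℕ) < k then h ⟨j', hc⟩ else b) j = psum h j := by
    intro h b j hj
    exact psum_congr _ _ j (fun a ha => by
      rw [dstep_eq _ a (by omega), dstep_eq _ a (by omega)]
      simp only []
      rw [dif_pos (by omega : a < k)])
  have hpsum_last : ∀ (h : Fin k → Bool) (b : Bool),
      psum (fun j' : Fin (k+1) => if hc : (j' : ℕ) < k then h ⟨j', hc⟩ else b) (k + 1)
        = psum h k + stepVal b := by
    intro h b
    rw [psum_succ, hpsum_app h b k le_rfl, dstep_eq _ k (by omega)]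
    congr 1
    show stepVal (if hc : k < k then _ else b) = stepVal b
    rw [dif_neg (lt_irrefl k)]
  have hgoodcard : good.card = (ballotF (k + 1)).card := by
    refine Finset.card_bij'
      (fun hb _ => fun j : Fin (k+1) => if hc : (j : ℕ) < k then hb.1 ⟨j, hc⟩ else hb.2)
      (fun w _ => (fun j : Fin k => w ⟨j, by have := j.isLt; omega⟩, w ⟨k, by omega⟩)) ?_ ?_ ?_ ?_
    · intro hb hhb
      have hng := (Finset.mem_filter.1 hhb).2
      have hball := (hmem_ballot hb.1).1
        ((Finset.mem_product.1 (Finset.mem_filter.1 hhb).1).1)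
      rw [hmem_ballot]
      intro j hj
      rcases Nat.lt_or_ge j (k + 1) with hc | hc
      · rw [hpsum_app hb.1 hb.2 j (by omega)]
        exact hball j (by omega)
      · have hjk : j = k + 1 := by omega
        subst hjk
        rw [hpsum_last]
        have h0 := hball k le_rfl
        cases hb2 : hb.2
        · have hne : psum hb.1 k ≠ 0 := fun c => hng ⟨c, hb2⟩
          simp only [stepVal, Bool.false_eq_true, if_false]
          omega
        · simp only [stepVal, if_true]
          omega
    · intro w hw
      rw [hmem_ballot] at hw
      apply Finset.mem_filter.2
      have hinit : ∀ j ≤ k, psum (fun j' : Fin k => w ⟨j', by have := j'.isLt; omega⟩) j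
          = psum w j := by
        intro j hj
        exact psum_congr _ _ j (fun a ha => by
          rw [dstep_eq _ a (by omega), dstep_eq _ a (by omega)])
      constructor
      · apply Finset.mem_product.2
        refine ⟨(hmem_ballot _).2 (fun j hj => by rw [hinit j hj]; exact hw j (by omega)),
          Finset.mem_univ _⟩
      · rintro ⟨hz, hlast⟩
        rw [hinit k le_rfl] at hz
        have h1 := hw (k + 1) le_rfl
        rw [psum_succ, dstep_eq _ k (by omega), hz] at h1
        simp only [] at hlast
        rw [hlast] at h1
        simp [stepVal] at h1
    · intro hb hhb
      apply Prod.ext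
      · funext j
        simp only []
        rw [dif_pos j.isLt]
      · simp only []
        rw [dif_neg (lt_irrefl k)]
    · intro w _
      funext j
      simp only []
      rcases lt_or_ge (j : ℕ) k with hc | hc
      · rw [dif_pos hc]
      · rw [dif_neg (by omega)]
        congr 1
        exact (Fin.ext (by show k = (j : ℕ); have := j.isLt; omega))
  omega

open DyckStep in
def toSteps {N : ℕ} (w : Fin N → Bool) : List DyckStep :=
  List.ofFn (fun j => if w j then U else D)

lemma toSteps_length {N : ℕ} (w : Fin N → Bool) : (toSteps w).length = N := by
  rw [toSteps, List.length_ofFn]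

open DyckStep in
lemma count_U_add_count_D (l : List DyckStep) : l.count U + l.count D = l.length := by
  induction l with
  | nil => rfl
  | cons a t ih =>
    cases a <;> simp [List.count_cons, ih] <;> omega

open DyckStep in
lemma toSteps_take_succ {N : ℕ} (w : Fin N → Bool) (i : ℕ) (hi : i < N) :
    (toSteps w).take (i + 1) = (toSteps w).take i ++ [if w ⟨i, hi⟩ then U else D] := by
  rw [List.take_succ]
  congr 1
  have hlen : i < (toSteps w).length := by rw [toSteps_length]; exact hi
  rw [List.getElem?_eq_getElem hlen]
  simp [toSteps]

open DyckStep in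
lemma toSteps_count {N : ℕ} (w : Fin N → Bool) (i : ℕ) (hi : i ≤ N) :
    (((toSteps w).take i).count U : ℤ) - (((toSteps w).take i).count D : ℤ) = psum w i := by
  induction i with
  | zero => simp [psum_zero]
  | succ m ih =>
    have hm : m < N := hi
    rw [toSteps_take_succ w m hm, psum_succ, dstep_eq _ m hm, ← ih (le_of_lt hm)]
    cases hb : w ⟨m, hm⟩ <;>
      simp [List.count_append, hb, stepVal] <;> ring

open DyckStep in
lemma toSteps_count_le {N : ℕ} (w : Fin N → Bool) (hb : ∀ i ≤ N, 0 ≤ psum w i) (i : ℕ) :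
    ((toSteps w).take i).count D ≤ ((toSteps w).take i).count U := by
  rcases le_or_gt i N with hc | hc
  · have := toSteps_count w i hc
    have h2 := hb i hc
    omega
  · rw [List.take_of_length_le (by rw [toSteps_length]; omega)]
    have := toSteps_count w N le_rfl
    rw [List.take_of_length_le (by rw [toSteps_length]) ] at this
    have h2 := hb N le_rfl
    omega

open DyckStep in
lemma toSteps_count_eq {N : ℕ} (w : Fin N → Bool) (hz : psum w N = 0) :
    (toSteps w).count U = (toSteps w).count D := by
  have := toSteps_count w N le_rfl
  rw [List.take_of_length_le (by rw [toSteps_length])] at this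
  rw [hz] at this
  omega

open Classical in
lemma mem_dyckF {m : ℕ} {h : Fin m → Bool} :
    h ∈ dyckF m ↔ (∀ i ≤ m, 0 ≤ psum h i) ∧ psum h m = 0 := by
  simp [dyckF]

open Classical in
lemma mem_ballotF {m : ℕ} {h : Fin m → Bool} :
    h ∈ ballotF m ↔ ∀ i ≤ m, 0 ≤ psum h i := by
  simp [ballotF]

open DyckStep in
lemma toSteps_of_list' (l : List DyckStep) (N : ℕ) (hN : l.length = N) :
    toSteps (fun i : Fin N => l[(i : ℕ)]'(by omega) == U) = l := by
  apply List.ext_getElem (by rw [toSteps_length, hN])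
  intro i h1 h2
  simp only [toSteps, List.getElem_ofFn]
  rcases (l[i]'h2).dichotomy with h | h <;> simp [h]

def fwd {k : ℕ} (h : Fin (2 * k) → Bool) (hb : ∀ i ≤ 2 * k, 0 ≤ psum h i)
    (hz : psum h (2 * k) = 0) : DyckWord :=
  ⟨toSteps h, toSteps_count_eq h hz, toSteps_count_le h hb⟩

lemma fwd_semilength {k : ℕ} (h : Fin (2 * k) → Bool) (hb : ∀ i ≤ 2 * k, 0 ≤ psum h i)
    (hz : psum h (2 * k) = 0) : (fwd h hb hz).semilength = k := by
  have h1 := count_U_add_count_D (toSteps h)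
  have h2 := toSteps_count_eq h hz
  have h3 := toSteps_length h
  show (toSteps h).count DyckStep.U = k
  omega

open DyckStep in
def bwd {k : ℕ} (p : DyckWord) (hp : p.semilength = k) : Fin (2 * k) → Bool :=
  fun i => p.toList[(i : ℕ)]'(by
    have := p.two_mul_semilength_eq_length
    rw [hp] at this
    have := i.isLt
    omega) == U

lemma bwd_toSteps {k : ℕ} (p : DyckWord) (hp : p.semilength = k) :
    toSteps (bwd p hp) = p.toList := by
  have hlen : p.toList.length = 2 * k := by
    have := p.two_mul_semilength_eq_length
    rw [hp] at this
    omega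
  exact toSteps_of_list' p.toList (2 * k) hlen

lemma bwd_mem {k : ℕ} (p : DyckWord) (hp : p.semilength = k) :
    (∀ i ≤ 2 * k, 0 ≤ psum (bwd p hp) i) ∧ psum (bwd p hp) (2 * k) = 0 := by
  have hlen : p.toList.length = 2 * k := by
    have := p.two_mul_semilength_eq_length
    rw [hp] at this
    omega
  constructor
  · intro i hi
    have hcount := toSteps_count (bwd p hp) i hi
    rw [bwd_toSteps] at hcount
    rw [← hcount]
    have := p.count_D_le_count_U i
    omega
  · have hcount := toSteps_count (bwd p hp) (2 * k) le_rfl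
    rw [bwd_toSteps] at hcount
    rw [← hcount, List.take_of_length_le (by omega), p.count_U_eq_count_D]
    omega

lemma bwd_fwd {k : ℕ} (h : Fin (2 * k) → Bool) (hb : ∀ i ≤ 2 * k, 0 ≤ psum h i)
    (hz : psum h (2 * k) = 0) (hsl : (fwd h hb hz).semilength = k) :
    bwd (fwd h hb hz) hsl = h := by
  funext i
  simp only [bwd, fwd, toSteps, List.getElem_ofFn]
  cases hbb : h i <;> simp [hbb]

open Classical in
lemma dyckF_card (k : ℕ) : (dyckF (2 * k)).card = catalan k := by
  rw [← DyckWord.card_dyckWord_semilength_eq_catalan k, ← Fintype.card_coe]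
  apply Fintype.card_congr
  exact {
    toFun := fun h => ⟨fwd h.1 (mem_dyckF.1 h.2).1 (mem_dyckF.1 h.2).2,
      fwd_semilength _ _ _⟩
    invFun := fun p => ⟨bwd p.1 p.2, mem_dyckF.2 (bwd_mem p.1 p.2)⟩
    left_inv := by
      rintro ⟨h, hh⟩
      apply Subtype.ext
      exact bwd_fwd h (mem_dyckF.1 hh).1 (mem_dyckF.1 hh).2 (fwd_semilength _ _ _)
    right_inv := by
      rintro ⟨p, hp⟩
      apply Subtype.ext
      apply DyckWord.ext
      exact bwd_toSteps p hp }

open Classical in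
lemma ballotF_zero_card : (ballotF 0).card = 1 := by
  have h : ballotF 0 = Finset.univ := by
    ext h
    simp only [ballotF, Finset.mem_filter, Finset.mem_univ, true_and, iff_true]
    intro i hi
    have : i = 0 := Nat.le_zero.mp hi
    subst this
    rw [psum_zero]
  rw [h, Finset.card_univ]
  simp

open Classical in
lemma dyckF_zero_card : (dyckF 0).card = 1 := by
  have h : dyckF 0 = Finset.univ := by
    ext h
    simp only [dyckF, Finset.mem_filter, Finset.mem_univ, true_and, iff_true]
    refine ⟨fun i hi => ?_, psum_zero h⟩
    have : i = 0 := Nat.le_zero.mp hi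
    subst this
    rw [psum_zero]
  rw [h, Finset.card_univ]
  simp

open Classical in
lemma ballotF_one_card : (ballotF 1).card = 1 := by
  have h1 : (ballotF 1).card + (dyckF 0).card = 2 * (ballotF 0).card := ballot_ext 0
  rw [ballotF_zero_card, dyckF_zero_card] at h1
  omega

open Classical in
lemma ballotF_two_card : (ballotF 2).card = 2 := by
  have h1 : (ballotF 2).card + (dyckF 1).card = 2 * (ballotF 1).card := ballot_ext 1
  have h2 : (dyckF 1).card = 0 := by
    rw [dyckF_odd_empty (by rw [Nat.even_iff]; omega)]
    exact Finset.card_empty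
  rw [ballotF_one_card] at h1
  omega

open Classical in
lemma ballot_two_step (k : ℕ) :
    (ballotF (2 * k + 2)).card + 2 * catalan k = 4 * (ballotF (2 * k)).card := by
  have h1 : (ballotF (2 * k + 2)).card + (dyckF (2 * k + 1)).card
      = 2 * (ballotF (2 * k + 1)).card := ballot_ext (2 * k + 1)
  have h2 := ballot_ext (2 * k)
  have h3 : (dyckF (2 * k + 1)).card = 0 := by
    rw [dyckF_odd_empty (by rw [Nat.even_iff]; omega)]
    exact Finset.card_empty
  have h4 : (dyckF (2 * k)).card = catalan k := dyckF_card k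
  omega

lemma catalan_rec (m : ℕ) : (2 * m + 4) * catalan (m + 1) = (8 * m + 4) * catalan m := by
  have h1 : (m + 2) * catalan (m + 1) = (4 * m + 2) * catalan m := by
    apply Nat.eq_of_mul_eq_mul_left (show 0 < m + 1 by omega)
    calc (m + 1) * ((m + 2) * catalan (m + 1))
        = (m + 1) * Nat.centralBinom (m + 1) := by
          rw [succ_mul_catalan_eq_centralBinom (m + 1)]
      _ = 2 * (2 * m + 1) * Nat.centralBinom m := Nat.succ_mul_centralBinom_succ m
      _ = 2 * (2 * m + 1) * ((m + 1) * catalan m) := by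
          rw [succ_mul_catalan_eq_centralBinom m]
      _ = (m + 1) * ((4 * m + 2) * catalan m) := by ring
  calc (2 * m + 4) * catalan (m + 1) = 2 * ((m + 2) * catalan (m + 1)) := by ring
    _ = 2 * ((4 * m + 2) * catalan m) := by rw [h1]
    _ = (8 * m + 4) * catalan m := by ring

lemma catalan_conv (m : ℕ) :
    ∑ j ∈ Finset.range m, catalan j * catalan (m - j) + catalan m = catalan (m + 1) := by
  rw [catalan_succ, Fin.sum_univ_eq_sum_range (fun i => catalan i * catalan (m - i)) (m + 1),
    Finset.sum_range_succ]
  simp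

open Classical in
lemma key_sum (m : ℕ) :
    ∑ j ∈ Finset.range m, catalan j * (ballotF (2 * (m - j))).card = 2 * m * catalan m := by
  induction m with
  | zero => simp
  | succ m ih =>
    rw [Finset.sum_range_succ]
    have hlast : catalan m * (ballotF (2 * (m + 1 - m))).card = catalan m * 2 := by
      have h : m + 1 - m = 1 := by omega
      rw [h, ballotF_two_card]
    rw [hlast]
    have e1 : ∑ j ∈ Finset.range m, catalan j * (ballotF (2 * (m + 1 - j))).card
        + 2 * ∑ j ∈ Finset.range m, catalan j * catalan (m - j)
        = 4 * ∑ j ∈ Finset.range m, catalan j * (ballotF (2 * (m - j))).card := by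
      rw [Finset.mul_sum, Finset.mul_sum, ← Finset.sum_add_distrib]
      apply Finset.sum_congr rfl
      intro j hj
      have hjm : j < m := Finset.mem_range.1 hj
      have hstep := ballot_two_step (m - j)
      have hidx : 2 * (m + 1 - j) = 2 * (m - j) + 2 := by omega
      rw [hidx]
      calc catalan j * (ballotF (2 * (m - j) + 2)).card + 2 * (catalan j * catalan (m - j))
          = catalan j * ((ballotF (2 * (m - j) + 2)).card + 2 * catalan (m - j)) := by ring
        _ = catalan j * (4 * (ballotF (2 * (m - j))).card) := by rw [hstep]
        _ = 4 * (catalan j * (ballotF (2 * (m - j))).card) := by ring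
    have e2 := catalan_conv m
    have e3 := catalan_rec m
    rw [ih] at e1
    -- let X := the unknown sum; linear arithmetic over products
    set X := ∑ j ∈ Finset.range m, catalan j * (ballotF (2 * (m + 1 - j))).card with hX
    set Y := ∑ j ∈ Finset.range m, catalan j * catalan (m - j) with hY
    have goal2 : X + catalan m * 2 = 2 * (m + 1) * catalan (m + 1) := by
      ring_nf at e1 e2 e3 ⊢
      omega
    exact goal2

open Classical in
lemma middle_sum (m : ℕ) :
    ∑ i ∈ Finset.range (2 * m), ((ballotF (2 * m)).filter (fun h => psum h i = 0)).card
      = 2 * m * catalan m := by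
  classical
  set F : ℕ → ℕ := fun i => ((ballotF (2 * m)).filter (fun h => psum h i = 0)).card with hF
  have hsplit : ∑ i ∈ Finset.range (2 * m), F i = ∑ j ∈ Finset.range m, F (2 * j) := by
    rw [← Finset.sum_filter_add_sum_filter_not (Finset.range (2 * m)) (fun i => Even i) F]
    have hodd : ∑ i ∈ (Finset.range (2 * m)).filter (fun i => ¬ Even i), F i = 0 := by
      apply Finset.sum_eq_zero
      intro i hi
      simp only [Finset.mem_filter, Finset.mem_range] at hi
      rw [hF]
      simp only []
      rw [filter_odd_empty (by omega) hi.2]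
      exact Finset.card_empty
    rw [hodd, add_zero]
    refine Finset.sum_nbij' (fun i => i / 2) (fun j => 2 * j) ?_ ?_ ?_ ?_ ?_
    · intro a ha
      simp only [Finset.mem_filter, Finset.mem_range] at ha
      have := Nat.even_iff.1 ha.2
      simp only [Finset.mem_range]
      omega
    · intro a ha
      simp only [Finset.mem_range] at ha
      simp only [Finset.mem_filter, Finset.mem_range]
      exact ⟨by omega, even_two_mul a⟩
    · intro a ha
      simp only [Finset.mem_filter, Finset.mem_range] at ha
      have := Nat.even_iff.1 ha.2
      show 2 * (a / 2) = a
      omega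
    · intro a ha
      show 2 * a / 2 = a
      omega
    · intro a ha
      simp only [Finset.mem_filter, Finset.mem_range] at ha
      have h2 := Nat.even_iff.1 ha.2
      have : 2 * (a / 2) = a := by omega
      rw [this]
  rw [hsplit, ← key_sum m]
  apply Finset.sum_congr rfl
  intro j hj
  have hjm : j < m := Finset.mem_range.1 hj
  rw [hF]
  simp only []
  rw [card_split (show 2 * j ≤ 2 * m by omega), dyckF_card j]
  have : 2 * m - 2 * j = 2 * (m - j) := by omega
  rw [this]


open Classical in
/-- **Theorem 4.5 (even case).** The total number of points on the x-axis, over all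
symmetric Dyck paths of length `4m` (i.e. `n = 2m`), is `(4m+1)·Cat_m`. -/
theorem total_axis_points_even (m : ℕ) :
    ∑ w ∈ Finset.univ.filter (fun w : Fin (2 * (2 * m)) → Bool => IsSymDyck w),
      axisPoints w = (4 * m + 1) * catalan m := by
  rw [reduction (2 * m), stepB (2 * m), middle_sum m, dyckF_card m]
  ring
end
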